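/- Let a, b be real numbers with 1 < a < b. Then π = (8/3)·b⁴·(𝕂 + 𝔼)/𝔽, where 𝕂 = ((b⁴−b²+1)/(b²−1))·K( (a²−1)b/(a(b²−1)) ) − ((b⁴+b²+1)/(1+b²))·K( (a²+1)b/(a(1+b²)) ), 𝔼 = (1−b²)·E( (a²−1)b/(a(b²−1)) ) + (1+b²)·E( (a²+1)b/(a(1+b²)) ), and 𝔽 = F_D^(3)(5/2; 1/2,1/2,1/2; 3 | a²/b², 1/(a²b²), 1/b⁴). -/

import Mathlib

open MeasureTheory Real

/-- Complete elliptic integral of the first kind. -/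
noncomputable def ellipticK (k : ℝ) : ℝ :=
  ∫ t in (0:ℝ)..1, 1 / Real.sqrt ((1 - t ^ 2) * (1 - k ^ 2 * t ^ 2))

/-- Complete elliptic integral of the second kind. -/
noncomputable def ellipticE (k : ℝ) : ℝ :=
  ∫ t in (0:ℝ)..1, Real.sqrt (1 - k ^ 2 * t ^ 2) / Real.sqrt (1 - t ^ 2)

/-- Lauricella hypergeometric function `F_D^(3)` (real arguments), via its
Euler integral representation. -/
noncomputable def FD3 (a b₁ b₂ b₃ c x₁ x₂ x₃ : ℝ) : ℝ :=
  Real.Gamma c / (Real.Gamma a * Real.Gamma (c - a)) *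
    ∫ u in (0:ℝ)..1,
      u ^ (a - 1) * (1 - u) ^ (c - a - 1) *
        (1 - x₁ * u) ^ (-b₁) * (1 - x₂ * u) ^ (-b₂) * (1 - x₃ * u) ^ (-b₃)

/-- Appell hypergeometric function `F₁` (real arguments), via its
Euler integral representation. -/
noncomputable def appellF1 (a b₁ b₂ c x y : ℝ) : ℝ :=
  Real.Gamma c / (Real.Gamma a * Real.Gamma (c - a)) *
    ∫ u in (0:ℝ)..1,
      u ^ (a - 1) * (1 - u) ^ (c - a - 1) * (1 - x * u) ^ (-b₁) * (1 - y * u) ^ (-b₂)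

/-- Lauricella hypergeometric function `F_D^(3)` (complex arguments), via its
Euler integral representation with principal branches. -/
noncomputable def FD3C (a b₁ b₂ b₃ c x₁ x₂ x₃ : ℂ) : ℂ :=
  Complex.Gamma c / (Complex.Gamma a * Complex.Gamma (c - a)) *
    ∫ u in (0:ℝ)..1,
      (u : ℂ) ^ (a - 1) * ((1 : ℂ) - (u : ℂ)) ^ (c - a - 1) *
        (1 - x₁ * (u : ℂ)) ^ (-b₁) * (1 - x₂ * (u : ℂ)) ^ (-b₂) *
        (1 - x₃ * (u : ℂ)) ^ (-b₃)

/-- Lauricella hypergeometric function `F_D^(4)` (complex arguments), via its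
Euler integral representation with principal branches. -/
noncomputable def FD4C (a b₁ b₂ b₃ b₄ c x₁ x₂ x₃ x₄ : ℂ) : ℂ :=
  Complex.Gamma c / (Complex.Gamma a * Complex.Gamma (c - a)) *
    ∫ u in (0:ℝ)..1,
      (u : ℂ) ^ (a - 1) * ((1 : ℂ) - (u : ℂ)) ^ (c - a - 1) *
        (1 - x₁ * (u : ℂ)) ^ (-b₁) * (1 - x₂ * (u : ℂ)) ^ (-b₂) *
        (1 - x₃ * (u : ℂ)) ^ (-b₃) * (1 - x₄ * (u : ℂ)) ^ (-b₄)


/-!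
Substituting `u = t²` turns the Euler integral of `F_D^(3)` into `∫₀¹ 2t⁴ / √P(t) dt` with
`P(t) = (1 - t²)(1 - t²/b⁴) · (1 - a²t²/b²)(1 - t²/(a²b²))`. For `ε = ±1` the substitution
`τ = (b² + ε)t / (b² + εt²)` fixes `0` and `1`, and turns `1 - τ²` and `1 - k²τ²`, for the modulus
`k = (a² + ε)b / (a(b² + ε))`, into the two quartic factors of `P(t)` times the same square; so the
elliptic integrals of the statement also become integrals of rational functions over `√P(t)`.
The resulting integrands differ by the derivative of `2b⁸ t √P(t) / (b⁴ - t⁴)`, which vanishes at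
`t = 0` and `t = 1`. To avoid integrating this improper difference, one shows instead that the
combination of all the partial integrals up to `s` and of the boundary term has derivative zero
on `[0, 1)`. Finally `Γ(3) / (Γ(5/2) Γ(1/2)) = 8 / (3π)`.
-/

open Set

theorem rpow_neg_one_half {x : ℝ} (hx : 0 ≤ x) : x ^ (-(1/2) : ℝ) = (√x)⁻¹ := by
  rw [sqrt_eq_rpow, rpow_neg hx]

theorem continuousOn_integral_comp {f φ : ℝ → ℝ} (hf : IntervalIntegrable f volume 0 1)
    (hφ : ContinuousOn φ (Icc 0 1)) (hmaps : MapsTo φ (Icc 0 1) (Icc 0 1)) :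
    ContinuousOn (fun s => ∫ x in (0:ℝ)..φ s, f x) (Icc 0 1) := by
  have hprim := intervalIntegral.continuousOn_primitive_interval ((intervalIntegrable_iff').mp hf)
  rw [uIcc_of_le zero_le_one] at hprim
  exact hprim.comp hφ hmaps

theorem hasDerivAt_integral_comp {f φ : ℝ → ℝ} {φ' t : ℝ} (hf : IntervalIntegrable f volume 0 1)
    (hcont : ContinuousOn f (Ioo (-1) 1)) (hφt : φ t ∈ Ico 0 1) (hφ : HasDerivAt φ φ' t) :
    HasDerivAt (fun s => ∫ x in (0:ℝ)..φ s, f x) (f (φ t) * φ') t := by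
  have hmem : φ t ∈ Ioo (-1 : ℝ) 1 := ⟨by linarith [hφt.1], hφt.2⟩
  have hsub : uIcc 0 (φ t) ⊆ uIcc 0 1 :=
    uIcc_subset_uIcc left_mem_uIcc (by rw [uIcc_of_le zero_le_one]; exact Ico_subset_Icc_self hφt)
  exact (intervalIntegral.integral_hasDerivAt_right (hf.mono_set hsub)
    (hcont.stronglyMeasurableAtFilter isOpen_Ioo _ hmem)
    (hcont.continuousAt (isOpen_Ioo.mem_nhds hmem))).comp t hφ

theorem intervalIntegrable_mul_one_sub_rpow_neg_half {g : ℝ → ℝ} (hg : ContinuousOn g (Icc 0 1)) :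
    IntervalIntegrable (fun u => g u * (1 - u) ^ (-(1/2) : ℝ)) volume 0 1 := by
  have hsing : IntervalIntegrable (fun u : ℝ => (1 - u) ^ (-(1/2) : ℝ)) volume 0 1 := by
    simpa using ((intervalIntegral.intervalIntegrable_rpow' (r := -(1/2)) (a := 0) (b := 1)
      (by norm_num)).comp_sub_left 1).symm
  exact hsing.continuousOn_mul (by rwa [uIcc_of_le zero_le_one])

noncomputable section

def ellipticKIntegrand (k τ : ℝ) : ℝ := 1 / √((1 - τ ^ 2) * (1 - k ^ 2 * τ ^ 2))

def ellipticEIntegrand (k τ : ℝ) : ℝ := √(1 - k ^ 2 * τ ^ 2) / √(1 - τ ^ 2)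

def lauricellaIntegrand (x₁ x₂ x₃ u : ℝ) : ℝ :=
  u ^ (3/2 : ℝ) * (1 - x₁ * u) ^ (-(1/2) : ℝ) * (1 - x₂ * u) ^ (-(1/2) : ℝ) *
    (1 - x₃ * u) ^ (-(1/2) : ℝ) * (1 - u) ^ (-(1/2) : ℝ)

def ellipticSubst (b ε t : ℝ) : ℝ := (b ^ 2 + ε) * t / (b ^ 2 + ε * t ^ 2)

def ellipticModulus (a b ε : ℝ) : ℝ := (a ^ 2 + ε) * b / (a * (b ^ 2 + ε))

def quarticA (b t : ℝ) : ℝ := (1 - t ^ 2) * (1 - t ^ 2 / b ^ 4)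

def quarticB (a b t : ℝ) : ℝ := (1 - a ^ 2 * t ^ 2 / b ^ 2) * (1 - t ^ 2 / (a ^ 2 * b ^ 2))

def boundaryTerm (a b t : ℝ) : ℝ := t * √(quarticA b t * quarticB a b t) / (b ^ 4 - t ^ 4)

-- `ε = -1` and `ε = 1` give the two halves of `𝕂 + 𝔼` in the statement.
def ellipticPrimitive (a b ε s : ℝ) : ℝ :=
  -ε * (b ^ 4 + ε * b ^ 2 + 1) / (b ^ 2 + ε) *
      (∫ τ in (0:ℝ)..ellipticSubst b ε s, ellipticKIntegrand (ellipticModulus a b ε) τ) +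
    (1 + ε * b ^ 2) *
      ∫ τ in (0:ℝ)..ellipticSubst b ε s, ellipticEIntegrand (ellipticModulus a b ε) τ

def lauricellaDefect (a b s : ℝ) : ℝ :=
  (∫ u in (0:ℝ)..s ^ 2, lauricellaIntegrand (a ^ 2 / b ^ 2) (1 / (a ^ 2 * b ^ 2)) (1 / b ^ 4) u) -
    b ^ 4 * (ellipticPrimitive a b (-1) s + ellipticPrimitive a b 1 s) +
    2 * b ^ 8 * boundaryTerm a b s

end

theorem ellipticK_eq_integral (k : ℝ) : ellipticK k = ∫ τ in (0:ℝ)..1, ellipticKIntegrand k τ := rfl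

theorem ellipticE_eq_integral (k : ℝ) : ellipticE k = ∫ τ in (0:ℝ)..1, ellipticEIntegrand k τ := rfl

section ellipticIntegrands

variable {k : ℝ}

theorem continuousOn_ellipticKIntegrand (hk : k ^ 2 < 1) :
    ContinuousOn (ellipticKIntegrand k) (Ioo (-1) 1) := by
  refine continuousOn_const.div (by fun_prop) fun τ hτ => (sqrt_pos.mpr ?_).ne'
  have hτ2 : τ ^ 2 < 1 := by nlinarith [hτ.1, hτ.2]
  exact mul_pos (by linarith) (by nlinarith [sq_nonneg k, sq_nonneg τ])

theorem continuousOn_ellipticEIntegrand : ContinuousOn (ellipticEIntegrand k) (Ioo (-1) 1) :=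
  ContinuousOn.div (by fun_prop) (by fun_prop) fun τ hτ =>
    (sqrt_pos.mpr (by nlinarith [hτ.1, hτ.2])).ne'

theorem intervalIntegrable_ellipticKIntegrand (hk : k ^ 2 < 1) :
    IntervalIntegrable (ellipticKIntegrand k) volume 0 1 := by
  refine (intervalIntegrable_mul_one_sub_rpow_neg_half
    (g := fun τ => (√((1 + τ) * (1 - k ^ 2 * τ ^ 2)))⁻¹) ?_).congr_uIoo ?_
  · refine ContinuousOn.inv₀ (by fun_prop) fun τ hτ => (sqrt_pos.mpr ?_).ne'
    have hτ2 : τ ^ 2 ≤ 1 := by nlinarith [hτ.1, hτ.2]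
    exact mul_pos (by linarith [hτ.1]) (by nlinarith [mul_le_mul_of_nonneg_left hτ2 (sq_nonneg k)])
  · intro τ hτ
    rw [uIoo_of_le zero_le_one] at hτ
    beta_reduce
    rw [ellipticKIntegrand, rpow_neg_one_half (by linarith [hτ.2]), ← mul_inv,
      ← sqrt_mul' _ (by linarith [hτ.2]), one_div]
    ring_nf

theorem intervalIntegrable_ellipticEIntegrand :
    IntervalIntegrable (ellipticEIntegrand k) volume 0 1 := by
  refine (intervalIntegrable_mul_one_sub_rpow_neg_half
    (g := fun τ => √(1 - k ^ 2 * τ ^ 2) * (√(1 + τ))⁻¹) ?_).congr_uIoo ?_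
  · exact ContinuousOn.mul (by fun_prop) (ContinuousOn.inv₀ (by fun_prop) fun τ hτ =>
      (sqrt_pos.mpr (by linarith [hτ.1])).ne')
  · intro τ hτ
    rw [uIoo_of_le zero_le_one] at hτ
    beta_reduce
    rw [ellipticEIntegrand, rpow_neg_one_half (by linarith [hτ.2]), mul_assoc, ← mul_inv,
      ← sqrt_mul' _ (by linarith [hτ.2]), div_eq_mul_inv]
    ring_nf

theorem ellipticKIntegrand_eq_of_factor {τ A B c : ℝ} (hAB : 0 ≤ A * B)
    (hτ : 1 - τ ^ 2 = A * c ^ 2) (hkτ : 1 - k ^ 2 * τ ^ 2 = B * c ^ 2) :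
    ellipticKIntegrand k τ = 1 / (c ^ 2 * √(A * B)) := by
  rw [ellipticKIntegrand, hτ, hkτ, show A * c ^ 2 * (B * c ^ 2) = A * B * (c ^ 2) ^ 2 by ring,
    sqrt_mul hAB, sqrt_sq (sq_nonneg c), mul_comm]

theorem ellipticEIntegrand_eq_of_factor {τ A B c : ℝ} (hA : 0 < A) (hB : 0 < B) (hc : c ≠ 0)
    (hτ : 1 - τ ^ 2 = A * c ^ 2) (hkτ : 1 - k ^ 2 * τ ^ 2 = B * c ^ 2) :
    ellipticEIntegrand k τ = B / √(A * B) := by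
  have hsA : 0 < √A := sqrt_pos.mpr hA
  have hsB : 0 < √B := sqrt_pos.mpr hB
  have hsc : 0 < √(c ^ 2) := sqrt_pos.mpr (by positivity)
  rw [ellipticEIntegrand, hτ, hkτ, sqrt_mul hA.le, sqrt_mul hB.le, sqrt_mul hA.le]
  field_simp
  rw [sq_sqrt hB.le]

end ellipticIntegrands

section lauricellaIntegrand

variable {x₁ x₂ x₃ : ℝ}

theorem continuousOn_one_sub_mul_rpow_neg_half {x : ℝ} (hx : x ∈ Ico 0 1) :
    ContinuousOn (fun u => (1 - x * u) ^ (-(1/2) : ℝ)) (Icc (-1) 1) :=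
  ContinuousOn.rpow_const (by fun_prop) fun u hu =>
    Or.inl (by nlinarith [hx.1, hx.2, hu.1, hu.2, abs_le.mpr hu])

theorem continuousOn_lauricellaIntegrand_regularPart (h₁ : x₁ ∈ Ico 0 1) (h₂ : x₂ ∈ Ico 0 1)
    (h₃ : x₃ ∈ Ico 0 1) :
    ContinuousOn (fun u => u ^ (3/2 : ℝ) * (1 - x₁ * u) ^ (-(1/2) : ℝ) *
      (1 - x₂ * u) ^ (-(1/2) : ℝ) * (1 - x₃ * u) ^ (-(1/2) : ℝ)) (Icc (-1) 1) :=
  (((continuous_id.rpow_const fun _ => Or.inr (by norm_num)).continuousOn.mul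
    (continuousOn_one_sub_mul_rpow_neg_half h₁)).mul
    (continuousOn_one_sub_mul_rpow_neg_half h₂)).mul (continuousOn_one_sub_mul_rpow_neg_half h₃)

theorem continuousOn_lauricellaIntegrand (h₁ : x₁ ∈ Ico 0 1) (h₂ : x₂ ∈ Ico 0 1)
    (h₃ : x₃ ∈ Ico 0 1) : ContinuousOn (lauricellaIntegrand x₁ x₂ x₃) (Ioo (-1) 1) :=
  ((continuousOn_lauricellaIntegrand_regularPart h₁ h₂ h₃).mono Ioo_subset_Icc_self).mul
    (ContinuousOn.rpow_const (by fun_prop) fun u hu => Or.inl (by linarith [hu.2]))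

theorem intervalIntegrable_lauricellaIntegrand (h₁ : x₁ ∈ Ico 0 1) (h₂ : x₂ ∈ Ico 0 1)
    (h₃ : x₃ ∈ Ico 0 1) : IntervalIntegrable (lauricellaIntegrand x₁ x₂ x₃) volume 0 1 :=
  intervalIntegrable_mul_one_sub_rpow_neg_half
    ((continuousOn_lauricellaIntegrand_regularPart h₁ h₂ h₃).mono
      (Icc_subset_Icc (by norm_num) le_rfl))

theorem lauricellaIntegrand_pos (h₁ : x₁ < 1) (h₂ : x₂ < 1) (h₃ : x₃ < 1) {u : ℝ}
    (hu : u ∈ Ioo 0 1) : 0 < lauricellaIntegrand x₁ x₂ x₃ u := by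
  have hfactor : ∀ x < (1 : ℝ), 0 < (1 - x * u) ^ (-(1/2) : ℝ) := fun x hx =>
    rpow_pos_of_pos (by nlinarith [hu.1, hu.2]) _
  exact mul_pos (mul_pos (mul_pos (mul_pos (rpow_pos_of_pos hu.1 _) (hfactor x₁ h₁))
    (hfactor x₂ h₂)) (hfactor x₃ h₃)) (rpow_pos_of_pos (by linarith [hu.2]) _)

end lauricellaIntegrand

theorem Gamma_five_halves : Gamma (5/2) = 3/4 * √π := by
  rw [show (5/2 : ℝ) = 3/2 + 1 by norm_num, Gamma_add_one (by norm_num),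
    show (3/2 : ℝ) = 1/2 + 1 by norm_num, Gamma_add_one (by norm_num), Gamma_one_half_eq]
  ring

theorem FD3_eq_integral_lauricellaIntegrand (x₁ x₂ x₃ : ℝ) :
    FD3 (5/2) (1/2) (1/2) (1/2) 3 x₁ x₂ x₃ =
      8 / (3 * π) * ∫ u in (0:ℝ)..1, lauricellaIntegrand x₁ x₂ x₃ u := by
  have hΓ : Gamma 3 / (Gamma (5/2) * Gamma (3 - 5/2)) = 8 / (3 * π) := by
    rw [show (3 : ℝ) = 2 + 1 by norm_num, Gamma_add_one two_ne_zero, Gamma_two,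
      show (2 + 1 - 5/2 : ℝ) = 1/2 by norm_num, Gamma_five_halves, Gamma_one_half_eq]
    field_simp
    rw [sq_sqrt pi_pos.le]
    ring
  rw [FD3, hΓ]
  congr 1
  refine intervalIntegral.integral_congr fun u _ => ?_
  rw [lauricellaIntegrand]
  norm_num
  ring

section substitution

variable {a b ε t : ℝ}

theorem one_sub_ellipticSubst_sq (hε : ε = 1 ∨ ε = -1) (hb : b ≠ 0) (ht : b ^ 2 + ε * t ^ 2 ≠ 0) :
    1 - ellipticSubst b ε t ^ 2 = quarticA b t * (b ^ 2 / (b ^ 2 + ε * t ^ 2)) ^ 2 := by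
  rw [ellipticSubst, quarticA]
  rcases hε with rfl | rfl <;> ring_nf at * <;> field_simp <;> ring

theorem one_sub_ellipticModulus_sq_mul (hε : ε = 1 ∨ ε = -1) (ha : a ≠ 0) (hb : b ≠ 0)
    (hbε : b ^ 2 + ε ≠ 0) (ht : b ^ 2 + ε * t ^ 2 ≠ 0) :
    1 - ellipticModulus a b ε ^ 2 * ellipticSubst b ε t ^ 2 =
      quarticB a b t * (b ^ 2 / (b ^ 2 + ε * t ^ 2)) ^ 2 := by
  rw [ellipticModulus, ellipticSubst, quarticB]
  rcases hε with rfl | rfl <;> ring_nf at * <;> field_simp <;> ring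

theorem hasDerivAt_ellipticSubst (ht : b ^ 2 + ε * t ^ 2 ≠ 0) :
    HasDerivAt (ellipticSubst b ε)
      ((b ^ 2 + ε) * (b ^ 2 - ε * t ^ 2) / (b ^ 2 + ε * t ^ 2) ^ 2) t := by
  have hnum : HasDerivAt (fun s => (b ^ 2 + ε) * s) (b ^ 2 + ε) t := by
    simpa using (hasDerivAt_id t).const_mul (b ^ 2 + ε)
  have hden : HasDerivAt (fun s => b ^ 2 + ε * s ^ 2) (ε * (2 * t)) t := by
    simpa using ((hasDerivAt_pow 2 t).const_mul ε).const_add (b ^ 2)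
  exact (hnum.div hden ht).congr_deriv (by ring)

theorem ellipticSubst_mem_Icc (hε : ε = 1 ∨ ε = -1) (hb : 1 < b) (ht : t ∈ Icc 0 1) :
    ellipticSubst b ε t ∈ Icc 0 1 := by
  obtain ⟨ht0, ht1⟩ := ht
  have hden : 0 < b ^ 2 + ε * t ^ 2 := by rcases hε with rfl | rfl <;> nlinarith
  have hbε : 0 ≤ b ^ 2 + ε := by rcases hε with rfl | rfl <;> nlinarith
  have hbt : 0 ≤ b ^ 2 - ε * t := by rcases hε with rfl | rfl <;> nlinarith
  rw [ellipticSubst, mem_Icc, div_le_one hden]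
  exact ⟨by positivity, by nlinarith [mul_nonneg (sub_nonneg.mpr ht1) hbt]⟩

theorem ellipticSubst_mem_Ico (hε : ε = 1 ∨ ε = -1) (hb : 1 < b) (ht : t ∈ Ico 0 1) :
    ellipticSubst b ε t ∈ Ico 0 1 := by
  obtain ⟨ht0, ht1⟩ := ht
  have hden : 0 < b ^ 2 + ε * t ^ 2 := by rcases hε with rfl | rfl <;> nlinarith
  have hbt : 0 < b ^ 2 - ε * t := by rcases hε with rfl | rfl <;> nlinarith
  refine ⟨(ellipticSubst_mem_Icc hε hb ⟨ht0, ht1.le⟩).1, ?_⟩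
  rw [ellipticSubst, div_lt_one hden]
  nlinarith [mul_pos (sub_pos.mpr ht1) hbt]

theorem ellipticSubst_zero : ellipticSubst b ε 0 = 0 := by
  simp [ellipticSubst]

theorem ellipticSubst_one (hbε : b ^ 2 + ε ≠ 0) : ellipticSubst b ε 1 = 1 := by
  rw [ellipticSubst, one_pow, mul_one, mul_one, div_self hbε]

theorem ellipticModulus_sq_lt_one (hε : ε = 1 ∨ ε = -1) (ha : 1 < a) (hab : a < b) :
    ellipticModulus a b ε ^ 2 < 1 := by
  have hden : 0 < a * (b ^ 2 + ε) := by rcases hε with rfl | rfl <;> nlinarith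
  have hnonneg : 0 ≤ (a ^ 2 + ε) * b := by rcases hε with rfl | rfl <;> nlinarith
  have hlt : (a ^ 2 + ε) * b < a * (b ^ 2 + ε) := by
    have hab1 : 0 < (b - a) * (a * b - 1) := mul_pos (by linarith) (by nlinarith)
    rcases hε with rfl | rfl <;> nlinarith
  have h0 : 0 ≤ ellipticModulus a b ε := div_nonneg hnonneg hden.le
  have h1 : ellipticModulus a b ε < 1 := (div_lt_one hden).mpr hlt
  nlinarith

theorem quarticA_pos (hb : 1 < b) (ht : t ^ 2 < 1) : 0 < quarticA b t := by
  have hb4 : 1 < b ^ 4 := one_lt_pow₀ hb (by norm_num)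
  exact mul_pos (by linarith) (by rw [sub_pos, div_lt_one (by positivity)]; linarith)

theorem quarticB_pos (ha : 1 < a) (hab : a < b) (ht : t ^ 2 < 1) : 0 < quarticB a b t := by
  have ha2 : 1 < a ^ 2 := by nlinarith
  have hab2 : a ^ 2 < b ^ 2 := by nlinarith
  have hab2' : 1 < a ^ 2 * b ^ 2 := by nlinarith [mul_pos (sub_pos.mpr ha2) (sub_pos.mpr hab2)]
  refine mul_pos ?_ ?_
  · rw [sub_pos, div_lt_one (by linarith)]
    nlinarith [mul_le_mul_of_nonneg_left ht.le (sq_nonneg a)]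
  · rw [sub_pos, div_lt_one (by linarith)]
    linarith

theorem hasDerivAt_quarticA : HasDerivAt (quarticA b)
    (-(2 * t) * (1 - t ^ 2 / b ^ 4) - (1 - t ^ 2) * (2 * t / b ^ 4)) t := by
  have h := ((hasDerivAt_pow 2 t).const_sub 1).mul
    (((hasDerivAt_pow 2 t).div_const (b ^ 4)).const_sub 1)
  exact h.congr_deriv (by push_cast; ring)

theorem hasDerivAt_quarticB : HasDerivAt (quarticB a b)
    (-(2 * a ^ 2 * t / b ^ 2) * (1 - t ^ 2 / (a ^ 2 * b ^ 2)) -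
      (1 - a ^ 2 * t ^ 2 / b ^ 2) * (2 * t / (a ^ 2 * b ^ 2))) t := by
  have h := ((((hasDerivAt_pow 2 t).const_mul (a ^ 2)).div_const (b ^ 2)).const_sub 1).mul
    (((hasDerivAt_pow 2 t).div_const (a ^ 2 * b ^ 2)).const_sub 1)
  exact h.congr_deriv (by push_cast; ring)

theorem hasDerivAt_integral_ellipticKIntegrand_ellipticSubst (hε : ε = 1 ∨ ε = -1)
    (ha : 1 < a) (hab : a < b) (ht : t ∈ Ico 0 1) :
    HasDerivAt
      (fun s => ∫ τ in (0:ℝ)..ellipticSubst b ε s, ellipticKIntegrand (ellipticModulus a b ε) τ)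
      ((b ^ 2 + ε) * (b ^ 2 - ε * t ^ 2) / b ^ 4 / √(quarticA b t * quarticB a b t)) t := by
  have hb : 1 < b := ha.trans hab
  have ht2 : t ^ 2 < 1 := by nlinarith [ht.1, ht.2]
  have hden : 0 < b ^ 2 + ε * t ^ 2 := by rcases hε with rfl | rfl <;> nlinarith
  have hbε : b ^ 2 + ε ≠ 0 := by rcases hε with rfl | rfl <;> nlinarith
  have hk := ellipticModulus_sq_lt_one hε ha hab
  have hAB := mul_pos (quarticA_pos hb ht2) (quarticB_pos ha hab ht2)
  have hvalue := ellipticKIntegrand_eq_of_factor hAB.le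
    (one_sub_ellipticSubst_sq hε (by positivity) hden.ne')
    (one_sub_ellipticModulus_sq_mul hε (by positivity) (by positivity) hbε hden.ne')
  refine (hasDerivAt_integral_comp (intervalIntegrable_ellipticKIntegrand hk)
    (continuousOn_ellipticKIntegrand hk) (ellipticSubst_mem_Ico hε hb ht)
    (hasDerivAt_ellipticSubst hden.ne')).congr_deriv ?_
  have hsAB : 0 < √(quarticA b t * quarticB a b t) := sqrt_pos.mpr hAB
  rw [hvalue]
  field_simp

theorem hasDerivAt_integral_ellipticEIntegrand_ellipticSubst (hε : ε = 1 ∨ ε = -1)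
    (ha : 1 < a) (hab : a < b) (ht : t ∈ Ico 0 1) :
    HasDerivAt
      (fun s => ∫ τ in (0:ℝ)..ellipticSubst b ε s, ellipticEIntegrand (ellipticModulus a b ε) τ)
      (quarticB a b t * ((b ^ 2 + ε) * (b ^ 2 - ε * t ^ 2) / (b ^ 2 + ε * t ^ 2) ^ 2) /
        √(quarticA b t * quarticB a b t)) t := by
  have hb : 1 < b := ha.trans hab
  have ht2 : t ^ 2 < 1 := by nlinarith [ht.1, ht.2]
  have hden : 0 < b ^ 2 + ε * t ^ 2 := by rcases hε with rfl | rfl <;> nlinarith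
  have hbε : b ^ 2 + ε ≠ 0 := by rcases hε with rfl | rfl <;> nlinarith
  have hvalue := ellipticEIntegrand_eq_of_factor (quarticA_pos hb ht2) (quarticB_pos ha hab ht2)
    (by positivity) (one_sub_ellipticSubst_sq hε (by positivity) hden.ne')
    (one_sub_ellipticModulus_sq_mul hε (by positivity) (by positivity) hbε hden.ne')
  refine (hasDerivAt_integral_comp intervalIntegrable_ellipticEIntegrand
    continuousOn_ellipticEIntegrand (ellipticSubst_mem_Ico hε hb ht)
    (hasDerivAt_ellipticSubst hden.ne')).congr_deriv ?_
  rw [hvalue]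
  ring

end substitution

section ellipticPrimitive

variable {a b ε t : ℝ}

theorem hasDerivAt_ellipticPrimitive (hε : ε = 1 ∨ ε = -1) (ha : 1 < a) (hab : a < b)
    (ht : t ∈ Ico 0 1) :
    HasDerivAt (ellipticPrimitive a b ε)
      ((-ε * (b ^ 4 + ε * b ^ 2 + 1) * (b ^ 2 - ε * t ^ 2) / b ^ 4 +
          (1 + ε * b ^ 2) * (b ^ 2 + ε) * (b ^ 2 - ε * t ^ 2) * quarticB a b t /
            (b ^ 2 + ε * t ^ 2) ^ 2) / √(quarticA b t * quarticB a b t)) t := by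
  have hbε : b ^ 2 + ε ≠ 0 := by rcases hε with rfl | rfl <;> nlinarith
  have hK := hasDerivAt_integral_ellipticKIntegrand_ellipticSubst hε ha hab ht
  have hE := hasDerivAt_integral_ellipticEIntegrand_ellipticSubst hε ha hab ht
  refine ((hK.const_mul _).add (hE.const_mul _)).congr_deriv ?_
  field_simp

theorem continuousOn_ellipticPrimitive (hε : ε = 1 ∨ ε = -1) (ha : 1 < a) (hab : a < b) :
    ContinuousOn (ellipticPrimitive a b ε) (Icc 0 1) := by
  have hb : 1 < b := ha.trans hab
  have hk := ellipticModulus_sq_lt_one hε ha hab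
  have hsubst : ContinuousOn (ellipticSubst b ε) (Icc 0 1) :=
    ContinuousOn.div (by fun_prop) (by fun_prop) fun t ht => by
      rcases hε with rfl | rfl <;> nlinarith [ht.1, ht.2]
  have hmaps : MapsTo (ellipticSubst b ε) (Icc 0 1) (Icc 0 1) := fun t ht =>
    ellipticSubst_mem_Icc hε hb ht
  exact (continuousOn_const.mul (continuousOn_integral_comp
      (intervalIntegrable_ellipticKIntegrand hk) hsubst hmaps)).add
    (continuousOn_const.mul (continuousOn_integral_comp intervalIntegrable_ellipticEIntegrand
      hsubst hmaps))

theorem ellipticPrimitive_zero : ellipticPrimitive a b ε 0 = 0 := by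
  simp [ellipticPrimitive, ellipticSubst_zero]

theorem ellipticPrimitive_one (hbε : b ^ 2 + ε ≠ 0) :
    ellipticPrimitive a b ε 1 = -ε * (b ^ 4 + ε * b ^ 2 + 1) / (b ^ 2 + ε) *
      ellipticK (ellipticModulus a b ε) + (1 + ε * b ^ 2) * ellipticE (ellipticModulus a b ε) := by
  rw [ellipticPrimitive, ellipticSubst_one hbε, ellipticK_eq_integral, ellipticE_eq_integral]

end ellipticPrimitive

section lauricellaDefect

variable {a b t : ℝ}

theorem lauricella_args_mem_Ico (ha : 1 < a) (hab : a < b) :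
    a ^ 2 / b ^ 2 ∈ Ico 0 1 ∧ 1 / (a ^ 2 * b ^ 2) ∈ Ico 0 1 ∧ 1 / b ^ 4 ∈ Ico 0 1 := by
  have ha2 : 1 < a ^ 2 := by nlinarith
  have hab2 : a ^ 2 < b ^ 2 := by nlinarith
  have hb4 : 1 < b ^ 4 := by nlinarith
  refine ⟨⟨by positivity, ?_⟩, ⟨by positivity, ?_⟩, ⟨by positivity, ?_⟩⟩ <;>
    rw [div_lt_one (by nlinarith)] <;> nlinarith

theorem lauricellaIntegrand_sq_mul (ha : 1 < a) (hab : a < b) (ht : t ∈ Ico 0 1) :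
    lauricellaIntegrand (a ^ 2 / b ^ 2) (1 / (a ^ 2 * b ^ 2)) (1 / b ^ 4) (t ^ 2) * (2 * t) =
      2 * t ^ 4 / √(quarticA b t * quarticB a b t) := by
  obtain ⟨ht0, ht1⟩ := ht
  obtain ⟨h₁, h₂, h₃⟩ := lauricella_args_mem_Ico ha hab
  have hfactor : ∀ x ∈ Ico (0 : ℝ) 1, 0 < 1 - x * t ^ 2 := fun x hx => by
    nlinarith [hx.1, hx.2, mul_le_mul_of_nonneg_left hx.2.le (sq_nonneg t)]
  have hpow : (t ^ 2) ^ (3/2 : ℝ) = t ^ 3 := by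
    rw [← rpow_natCast t 2, ← rpow_mul ht0]
    norm_num
  have hprod : quarticA b t * quarticB a b t = (1 - a ^ 2 / b ^ 2 * t ^ 2) *
      (1 - 1 / (a ^ 2 * b ^ 2) * t ^ 2) * (1 - 1 / b ^ 4 * t ^ 2) * (1 - t ^ 2) := by
    rw [quarticA, quarticB]
    ring
  rw [lauricellaIntegrand, hpow, rpow_neg_one_half (hfactor _ h₁).le,
    rpow_neg_one_half (hfactor _ h₂).le, rpow_neg_one_half (hfactor _ h₃).le,
    rpow_neg_one_half (by nlinarith), hprod,
    sqrt_mul (mul_pos (mul_pos (hfactor _ h₁) (hfactor _ h₂)) (hfactor _ h₃)).le,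
    sqrt_mul (mul_pos (hfactor _ h₁) (hfactor _ h₂)).le, sqrt_mul (hfactor _ h₁).le]
  have hs₀ : 0 < √(1 - t ^ 2) := sqrt_pos.mpr (by nlinarith)
  have hs₁ := sqrt_pos.mpr (hfactor _ h₁)
  have hs₂ := sqrt_pos.mpr (hfactor _ h₂)
  have hs₃ := sqrt_pos.mpr (hfactor _ h₃)
  field_simp

theorem hasDerivAt_integral_lauricellaIntegrand_sq (ha : 1 < a) (hab : a < b) (ht : t ∈ Ico 0 1) :
    HasDerivAt (fun s => ∫ u in (0:ℝ)..s ^ 2,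
        lauricellaIntegrand (a ^ 2 / b ^ 2) (1 / (a ^ 2 * b ^ 2)) (1 / b ^ 4) u)
      (2 * t ^ 4 / √(quarticA b t * quarticB a b t)) t := by
  obtain ⟨h₁, h₂, h₃⟩ := lauricella_args_mem_Ico ha hab
  rw [← lauricellaIntegrand_sq_mul ha hab ht]
  exact hasDerivAt_integral_comp (intervalIntegrable_lauricellaIntegrand h₁ h₂ h₃)
    (continuousOn_lauricellaIntegrand h₁ h₂ h₃) ⟨sq_nonneg t, by nlinarith [ht.1, ht.2]⟩
    (by simpa using hasDerivAt_pow 2 t)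

theorem hasDerivAt_mul_sqrt_div {P : ℝ → ℝ} {P' c : ℝ} (hP : HasDerivAt P P' t) (hPt : 0 < P t)
    (hct : c - t ^ 4 ≠ 0) :
    HasDerivAt (fun s => s * √(P s) / (c - s ^ 4))
      (((P t + t * P' / 2) * (c - t ^ 4) + 4 * t ^ 4 * P t) / (c - t ^ 4) ^ 2 / √(P t)) t := by
  have hsqrt := (hasDerivAt_id' t).mul (hP.sqrt hPt.ne')
  have hden : HasDerivAt (fun s => c - s ^ 4) (-(4 * t ^ 3)) t := by
    simpa using (hasDerivAt_pow 4 t).const_sub c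
  refine (hsqrt.div hden hct).congr_deriv ?_
  have hX : 0 < √(P t) := sqrt_pos.mpr hPt
  simp only [Pi.mul_apply]
  field_simp
  rw [sq_sqrt hPt.le]
  ring

theorem lauricellaDefect_deriv_identity (ha : a ≠ 0) (hb : b ≠ 0) (ht₁ : b ^ 2 - t ^ 2 ≠ 0)
    (ht₂ : b ^ 2 + t ^ 2 ≠ 0) :
    2 * t ^ 4 -
      b ^ 4 * ((b ^ 4 - b ^ 2 + 1) * (b ^ 2 + t ^ 2) / b ^ 4 -
          (b ^ 2 - 1) ^ 2 * (b ^ 2 + t ^ 2) * quarticB a b t / (b ^ 2 - t ^ 2) ^ 2 -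
        (b ^ 4 + b ^ 2 + 1) * (b ^ 2 - t ^ 2) / b ^ 4 +
          (b ^ 2 + 1) ^ 2 * (b ^ 2 - t ^ 2) * quarticB a b t / (b ^ 2 + t ^ 2) ^ 2) +
      2 * b ^ 8 * (((quarticA b t * quarticB a b t + t *
          ((-(2 * t) * (1 - t ^ 2 / b ^ 4) - (1 - t ^ 2) * (2 * t / b ^ 4)) * quarticB a b t +
            quarticA b t * (-(2 * a ^ 2 * t / b ^ 2) * (1 - t ^ 2 / (a ^ 2 * b ^ 2)) -
              (1 - a ^ 2 * t ^ 2 / b ^ 2) * (2 * t / (a ^ 2 * b ^ 2)))) / 2) * (b ^ 4 - t ^ 4) +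
        4 * t ^ 4 * (quarticA b t * quarticB a b t)) / (b ^ 4 - t ^ 4) ^ 2) = 0 := by
  have ht₄ : b ^ 4 - t ^ 4 ≠ 0 := by
    rw [show b ^ 4 - t ^ 4 = (b ^ 2 - t ^ 2) * (b ^ 2 + t ^ 2) by ring]
    exact mul_ne_zero ht₁ ht₂
  rw [quarticA, quarticB]
  field_simp
  ring

theorem hasDerivAt_lauricellaDefect (ha : 1 < a) (hab : a < b) (ht : t ∈ Ico 0 1) :
    HasDerivAt (lauricellaDefect a b) 0 t := by
  have hb : 1 < b := ha.trans hab
  have ht2 : t ^ 2 < 1 := by nlinarith [ht.1, ht.2]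
  have hAB := mul_pos (quarticA_pos hb ht2) (quarticB_pos ha hab ht2)
  have hboundary := hasDerivAt_mul_sqrt_div (c := b ^ 4)
    (hasDerivAt_quarticA.mul hasDerivAt_quarticB) hAB (by nlinarith [one_lt_pow₀ hb four_ne_zero])
  simp only [Pi.mul_apply] at hboundary
  refine (((hasDerivAt_integral_lauricellaIntegrand_sq ha hab ht).sub
    (((hasDerivAt_ellipticPrimitive (Or.inr rfl) ha hab ht).add
      (hasDerivAt_ellipticPrimitive (Or.inl rfl) ha hab ht)).const_mul (b ^ 4))).add
    (hboundary.const_mul (2 * b ^ 8))).congr_deriv ?_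
  linear_combination lauricellaDefect_deriv_identity (a := a) (b := b) (t := t) (by positivity)
    (by positivity) (by nlinarith) (by nlinarith) / √(quarticA b t * quarticB a b t)

theorem continuousOn_lauricellaDefect (ha : 1 < a) (hab : a < b) :
    ContinuousOn (lauricellaDefect a b) (Icc 0 1) := by
  obtain ⟨h₁, h₂, h₃⟩ := lauricella_args_mem_Ico ha hab
  have hb4 : 1 < b ^ 4 := one_lt_pow₀ (ha.trans hab) four_ne_zero
  have hsq : MapsTo (fun s : ℝ => s ^ 2) (Icc 0 1) (Icc 0 1) := fun s hs =>
    ⟨sq_nonneg s, by nlinarith [hs.1, hs.2]⟩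
  have hboundary : ContinuousOn (boundaryTerm a b) (Icc 0 1) :=
    ContinuousOn.div (by unfold quarticA quarticB; fun_prop) (by fun_prop) fun s hs => by
      nlinarith [pow_le_one₀ hs.1 hs.2 (n := 4)]
  exact ((continuousOn_integral_comp (intervalIntegrable_lauricellaIntegrand h₁ h₂ h₃)
    (by fun_prop) hsq).sub (continuousOn_const.mul
      ((continuousOn_ellipticPrimitive (Or.inr rfl) ha hab).add
        (continuousOn_ellipticPrimitive (Or.inl rfl) ha hab)))).add
    (continuousOn_const.mul hboundary)

theorem lauricellaDefect_zero : lauricellaDefect a b 0 = 0 := by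
  simp [lauricellaDefect, ellipticPrimitive_zero, boundaryTerm]

theorem boundaryTerm_one : boundaryTerm a b 1 = 0 := by
  simp [boundaryTerm, quarticA]

theorem integral_lauricellaIntegrand_eq (ha : 1 < a) (hab : a < b) :
    ∫ u in (0:ℝ)..1, lauricellaIntegrand (a ^ 2 / b ^ 2) (1 / (a ^ 2 * b ^ 2)) (1 / b ^ 4) u =
      b ^ 4 * (((b ^ 4 - b ^ 2 + 1) / (b ^ 2 - 1) *
            ellipticK ((a ^ 2 - 1) * b / (a * (b ^ 2 - 1))) -
          (b ^ 4 + b ^ 2 + 1) / (1 + b ^ 2) * ellipticK ((a ^ 2 + 1) * b / (a * (1 + b ^ 2)))) +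
        ((1 - b ^ 2) * ellipticE ((a ^ 2 - 1) * b / (a * (b ^ 2 - 1))) +
          (1 + b ^ 2) * ellipticE ((a ^ 2 + 1) * b / (a * (1 + b ^ 2))))) := by
  have hb : 1 < b := ha.trans hab
  have hconst := constant_of_has_deriv_right_zero (continuousOn_lauricellaDefect ha hab)
    (fun t ht => (hasDerivAt_lauricellaDefect ha hab ht).hasDerivWithinAt) 1
    (right_mem_Icc.mpr zero_le_one)
  have hmodulusNeg : ellipticModulus a b (-1) = (a ^ 2 - 1) * b / (a * (b ^ 2 - 1)) := by
    rw [ellipticModulus]; ring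
  have hmodulusPos : ellipticModulus a b 1 = (a ^ 2 + 1) * b / (a * (1 + b ^ 2)) := by
    rw [ellipticModulus]; ring
  rw [lauricellaDefect_zero, lauricellaDefect, ellipticPrimitive_one (by nlinarith),
    ellipticPrimitive_one (by nlinarith), hmodulusNeg, hmodulusPos, boundaryTerm_one,
    one_pow] at hconst
  linear_combination hconst

end lauricellaDefect

theorem stmt_15 (a b : ℝ) (ha : 1 < a) (hab : a < b) :
    π = (8/3) * b^4 *
        ((((b^4 - b^2 + 1) / (b^2 - 1)) * ellipticK ((a^2 - 1) * b / (a * (b^2 - 1))) -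
            ((b^4 + b^2 + 1) / (1 + b^2)) * ellipticK ((a^2 + 1) * b / (a * (1 + b^2)))) +
          ((1 - b^2) * ellipticE ((a^2 - 1) * b / (a * (b^2 - 1))) +
            (1 + b^2) * ellipticE ((a^2 + 1) * b / (a * (1 + b^2))))) /
        FD3 (5/2) (1/2) (1/2) (1/2) 3 (a^2/b^2) (1/(a^2*b^2)) (1/b^4) := by
  obtain ⟨h₁, h₂, h₃⟩ := lauricella_args_mem_Ico ha hab
  have hpos : 0 < ∫ u in (0:ℝ)..1,
      lauricellaIntegrand (a ^ 2 / b ^ 2) (1 / (a ^ 2 * b ^ 2)) (1 / b ^ 4) u :=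
    intervalIntegral.intervalIntegral_pos_of_pos_on
      (intervalIntegrable_lauricellaIntegrand h₁ h₂ h₃)
      (fun u hu => lauricellaIntegrand_pos h₁.2 h₂.2 h₃.2 hu) one_pos
  rw [FD3_eq_integral_lauricellaIntegrand, mul_assoc, ← integral_lauricellaIntegrand_eq ha hab]
  field_simp
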